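/- With φ the positive ground state, any eigenfunction v of L₊ = −d²/dx² + μ − 3φ² (Dirichlet on (0,1)) with eigenvalue 0 that is even about x = 1/2 and has exactly one zero in (0,1) must have that zero at x = 1/2, yielding a contradiction; hence no even eigenfunction for eigenvalue 0 with one interior zero exists. -/

import Mathlib

/-!
By evenness, the unique interior zero of `v` is fixed by `x ↦ 1 - x`, so it is `1/2`, and `v'`
vanishes there as well. But `v'' = (μ - 3φ²) v` is a linear second-order ODE with a continuous
coefficient, so `v(1/2) = v'(1/2) = 0` forces `v ≡ 0` on `(0,1)` by uniqueness of solutions,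
and then also on `[0,1]` by the Dirichlet conditions.
-/

open Real Set intervalIntegral

/-- Domain of the Sturm–Liouville operators: C² functions with Dirichlet conditions. -/
def Dom2 (u : ℝ → ℝ) : Prop := ContDiff ℝ 2 u ∧ u 0 = 0 ∧ u 1 = 0

/-- The operator L₊ = −d²/dx² + μ − 3φ². -/
noncomputable def Lplus (μ : ℝ) (φ u : ℝ → ℝ) (x : ℝ) : ℝ :=
  -(deriv (deriv u) x) + μ * u x - 3 * (φ x)^2 * u x

theorem deriv_eq_zero_of_comp_const_sub_eq {f : ℝ → ℝ} {a : ℝ} (hf : ∀ x, f (a - x) = f x) :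
    deriv f (a / 2) = 0 := by
  have h := deriv_comp_const_sub (f := f) (a := a) (x := a / 2)
  rw [funext hf, sub_half] at h
  linarith

theorem apply_half_eq_zero_of_existsUnique_zero {f : ℝ → ℝ} {a : ℝ} (hf : ∀ x, f (a - x) = f x)
    (h : ∃! x, x ∈ Ioo 0 a ∧ f x = 0) : f (a / 2) = 0 := by
  obtain ⟨x, ⟨hx, hfx⟩, huniq⟩ := h
  have hx' : a - x = x := huniq (a - x) ⟨⟨by linarith [hx.2], by linarith [hx.1]⟩, hf x ▸ hfx⟩
  rwa [show a / 2 = x by linarith]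

theorem lipschitzWith_linearSecondOrderField (q : ℝ) :
    LipschitzWith (max 1 ‖q‖₊) fun p : ℝ × ℝ ↦ (p.2, q * p.1) :=
  LipschitzWith.prod_snd.prodMk <|
    ((lipschitzWith_smul q).comp LipschitzWith.prod_fst).weaken (mul_one _).le

theorem eqOn_zero_of_hasDerivAt_mul_self {q v v' : ℝ → ℝ} {a b t₀ : ℝ}
    (hq : ContinuousOn q (Icc a b))
    (hv : ∀ t ∈ Ioo a b, HasDerivAt v (v' t) t)
    (hv' : ∀ t ∈ Ioo a b, HasDerivAt v' (q t * v t) t)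
    (ht₀ : t₀ ∈ Ioo a b) (h₀ : v t₀ = 0) (h₀' : v' t₀ = 0) : EqOn v 0 (Ioo a b) := by
  obtain ⟨C, hC⟩ := isCompact_Icc.exists_bound_of_continuousOn hq
  have hqC : ∀ t ∈ Ioo a b, ‖q t‖₊ ≤ C.toNNReal := fun t ht ↦ by
    rw [← norm_toNNReal]
    exact toNNReal_le_toNNReal (hC t (Ioo_subset_Icc_self ht))
  have hlip : ∀ t ∈ Ioo a b, LipschitzOnWith (max 1 C.toNNReal)
      (fun p : ℝ × ℝ ↦ (p.2, q t * p.1)) univ := fun t ht ↦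
    ((lipschitzWith_linearSecondOrderField (q t)).weaken
      (max_le_max le_rfl (hqC t ht))).lipschitzOnWith
  have hsol := ODE_solution_unique_of_mem_Ioo hlip ht₀
    (f := fun t ↦ (v t, v' t)) (g := fun _ ↦ 0)
    (fun t ht ↦ ⟨(hv t ht).prodMk (hv' t ht), trivial⟩)
    (fun t _ ↦ ⟨(hasDerivAt_const t _).congr_deriv (by ext <;> simp), trivial⟩)
    (by simp [h₀, h₀'])
  exact fun t ht ↦ congrArg Prod.fst (hsol ht)

theorem no_even_kernel_eigenfunction_with_one_zero_general (μ : ℝ) (φ : ℝ → ℝ)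
    (hφreg : ContDiff ℝ 2 φ) :
    ¬ ∃ v : ℝ → ℝ, Dom2 v ∧ (∃ x ∈ Set.Icc (0:ℝ) 1, v x ≠ 0) ∧
        (∀ x ∈ Set.Ioo (0:ℝ) 1, Lplus μ φ v x = 0) ∧
        (∀ x : ℝ, v (1 - x) = v x) ∧
        (∃! x : ℝ, x ∈ Set.Ioo (0:ℝ) 1 ∧ v x = 0) := by
  rintro ⟨v, ⟨hv, hv0, hv1⟩, ⟨x, hx, hvx⟩, hL, hsym, huniq⟩
  have hdv : Differentiable ℝ v := hv.differentiable (by norm_num)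
  have hddv : Differentiable ℝ (deriv v) := by
    simpa using hv.differentiable_iteratedDeriv 1 (by norm_num)
  have hode : ∀ t ∈ Ioo (0 : ℝ) 1,
      HasDerivAt (deriv v) ((μ - 3 * φ t ^ 2) * v t) t := fun t ht ↦ by
    have hLt := hL t ht
    unfold Lplus at hLt
    exact (hddv t).hasDerivAt.congr_deriv (by linear_combination -hLt)
  have hvanish : EqOn v 0 (Ioo 0 1) :=
    eqOn_zero_of_hasDerivAt_mul_self (by have := hφreg.continuous; fun_prop)
      (fun t _ ↦ (hdv t).hasDerivAt) hode (t₀ := 1 / 2) (by norm_num)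
      (apply_half_eq_zero_of_existsUnique_zero hsym huniq)
      (deriv_eq_zero_of_comp_const_sub_eq hsym)
  rcases eq_endpoints_or_mem_Ioo_of_mem_Icc hx with rfl | rfl | hx
  exacts [hvx hv0, hvx hv1, hvx (hvanish hx)]

/-- There is no nontrivial eigenfunction of L₊ for eigenvalue 0 which is even
about x = 1/2 and has exactly one zero in (0,1). -/
theorem no_even_kernel_eigenfunction_with_one_zero (μ : ℝ) (hμ : 0 < μ) (φ : ℝ → ℝ)
    (hφreg : ContDiff ℝ 2 φ) (hφ0 : φ 0 = 0) (hφ1 : φ 1 = 0)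
    (hφpos : ∀ x ∈ Set.Ioo (0:ℝ) 1, 0 < φ x)
    (hφode : ∀ x ∈ Set.Ioo (0:ℝ) 1,
      -(deriv (deriv φ) x) + μ * φ x - (φ x)^3 = 0)
    (hφsym : ∀ x : ℝ, φ (1 - x) = φ x) :
    ¬ ∃ v : ℝ → ℝ, Dom2 v ∧ (∃ x ∈ Set.Icc (0:ℝ) 1, v x ≠ 0) ∧
        (∀ x ∈ Set.Ioo (0:ℝ) 1, Lplus μ φ v x = 0) ∧
        (∀ x : ℝ, v (1 - x) = v x) ∧
        (∃! x : ℝ, x ∈ Set.Ioo (0:ℝ) 1 ∧ v x = 0) :=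
  no_even_kernel_eigenfunction_with_one_zero_general μ φ hφreg
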